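/- Soundness of IMCalc: if Γ ⊢_{IMCalc} φ, then Γ ⊩^{inm} φ, i.e. every world of every intuitionistic neighbourhood model satisfying all formulas of Γ also satisfies φ. -/
import Mathlib


/-
Common formalisation of the syntax and semantics of the intuitionistic
monotone modal logic IM, its generalised Hilbert calculi, intuitionistic
neighbourhood models, IFOM-structures, and related constructions.
-/

namespace IMPaper

/-- Formulas of the monotone modal language L. -/
inductive Formula : Type
  | prop : ℕ → Formula
  | bot  : Formula
  | and  : Formula → Formula → Formula
  | or   : Formula → Formula → Formula
  | imp  : Formula → Formula → Formula
  | box  : Formula → Formula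
  | dia  : Formula → Formula
deriving DecidableEq

/-- Negation: ¬φ abbreviates φ → ⊥. -/
def Formula.neg (φ : Formula) : Formula := φ.imp .bot

/-- Top: ⊤ abbreviates ⊥ → ⊥. -/
def Formula.top : Formula := Formula.bot.imp .bot

/-- Substitution of formulas for proposition letters. -/
def Formula.subst (σ : ℕ → Formula) : Formula → Formula
  | .prop i   => σ i
  | .bot      => .bot
  | .and φ ψ  => .and (φ.subst σ) (ψ.subst σ)
  | .or φ ψ   => .or (φ.subst σ) (ψ.subst σ)
  | .imp φ ψ  => .imp (φ.subst σ) (ψ.subst σ)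
  | .box φ    => .box (φ.subst σ)
  | .dia φ    => .dia (φ.subst σ)

private def pp0 : Formula := .prop 0
private def pp1 : Formula := .prop 1
private def pp2 : Formula := .prop 2

/-- A standard axiomatisation of intuitionistic propositional logic. -/
def IpcAx : Set Formula :=
  { Formula.imp pp0 (.imp pp1 pp0),
    Formula.imp (.imp pp0 (.imp pp1 pp2)) (.imp (.imp pp0 pp1) (.imp pp0 pp2)),
    Formula.imp (.and pp0 pp1) pp0,
    Formula.imp (.and pp0 pp1) pp1,
    Formula.imp pp0 (.imp pp1 (.and pp0 pp1)),
    Formula.imp pp0 (.or pp0 pp1),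
    Formula.imp pp1 (.or pp0 pp1),
    Formula.imp (.imp pp0 pp2) (.imp (.imp pp1 pp2) (.imp (.or pp0 pp1) pp2)),
    Formula.imp .bot pp0 }

/-- All substitution instances of a set of formulas. -/
def Instances (Ax : Set Formula) : Set Formula :=
  {φ | ∃ ψ ∈ Ax, ∃ σ, φ = ψ.subst σ}

/-- 𝒜x: all substitution instances of Ax together with all substitution
instances of the axioms of intuitionistic propositional logic. -/
def ScrAx (Ax : Set Formula) : Set Formula := Instances Ax ∪ Instances IpcAx

/-- The generalised Hilbert calculus GHC(Ax). -/
inductive GHC (Ax : Set Formula) : Set Formula → Formula → Prop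
  | el {Γ : Set Formula} {φ : Formula} : φ ∈ Γ → GHC Ax Γ φ
  | ax {Γ : Set Formula} {φ : Formula} : φ ∈ ScrAx Ax → GHC Ax Γ φ
  | mp {Γ : Set Formula} {φ ψ : Formula} :
      GHC Ax Γ φ → GHC Ax Γ (φ.imp ψ) → GHC Ax Γ ψ
  | monBox {Γ : Set Formula} {φ ψ : Formula} :
      GHC Ax ∅ (φ.imp ψ) → GHC Ax Γ ((Formula.box φ).imp (Formula.box ψ))
  | monDia {Γ : Set Formula} {φ ψ : Formula} :
      GHC Ax ∅ (φ.imp ψ) → GHC Ax Γ ((Formula.dia φ).imp (Formula.dia ψ))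

/-- The axioms (neg_a) and (I_◇) of the calculus IMCalc. -/
def IMAx : Set Formula :=
  { Formula.imp ((Formula.box pp0).and (Formula.dia pp0.neg)) .bot,
    Formula.imp ((Formula.box Formula.top).imp (Formula.dia pp0)) (Formula.dia pp0) }

/-- Derivability in the calculus IMCalc = GHC({(□p ∧ ◇¬p) → ⊥, (□⊤ → ◇p) → ◇p}). -/
def IMC : Set Formula → Formula → Prop := GHC IMAx

/-- An intuitionistic neighbourhood: a partial function W ⇀ 𝒫(W), encoded as a
domain together with a (total) value function whose values matter on the domain. -/
structure Nbhd (W : Type) where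
  dom : Set W
  val : W → Set W

/-- The data of an intuitionistic neighbourhood model. -/
structure INStruct (W : Type) where
  le : W → W → Prop
  N : Set (Nbhd W)
  V : ℕ → Set W

variable {W W' : Type}

/-- A set is upward closed w.r.t. the order of the structure. -/
def INStruct.Up (M : INStruct W) (s : Set W) : Prop :=
  ∀ ⦃w v : W⦄, M.le w v → w ∈ s → v ∈ s

/-- `M` is an intuitionistic neighbourhood model: the order is a partial order,
the domain of every neighbourhood is upward closed, and the valuation assigns
upward closed sets to proposition letters. -/
def INStruct.IsModel (M : INStruct W) : Prop :=
  IsPartialOrder W M.le ∧ (∀ a ∈ M.N, M.Up a.dom) ∧ ∀ i, M.Up (M.V i)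

/-- Truth of a formula at a world of an intuitionistic neighbourhood model. -/
def INStruct.sat (M : INStruct W) : Formula → W → Prop
  | .prop i, w  => w ∈ M.V i
  | .bot, _     => False
  | .and φ ψ, w => M.sat φ w ∧ M.sat ψ w
  | .or φ ψ, w  => M.sat φ w ∨ M.sat ψ w
  | .imp φ ψ, w => ∀ v, M.le w v → M.sat φ v → M.sat ψ v
  | .box φ, w   => ∃ a ∈ M.N, w ∈ a.dom ∧
      ∀ w', M.le w w' → ∀ v ∈ a.val w', M.sat φ v
  | .dia φ, w   => ∀ w', M.le w w' → ∀ a ∈ M.N, w' ∈ a.dom →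
      ∃ v ∈ a.val w', M.sat φ v

/-- Semantic consequence over the class of all intuitionistic neighbourhood models. -/
def INConseq (Γ : Set Formula) (φ : Formula) : Prop :=
  ∀ (W : Type) (M : INStruct W), M.IsModel →
    ∀ w : W, (∀ ψ ∈ Γ, M.sat ψ w) → M.sat φ w

/-- A coherent intuitionistic neighbourhood: conditions (N1) and (N2). -/
def INStruct.CoherentNbhd (M : INStruct W) (a : Nbhd W) : Prop :=
  (∀ ⦃w w' : W⦄, M.le w w' → w ∈ a.dom → ∀ v ∈ a.val w, ∃ v' ∈ a.val w', M.le v v') ∧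
  (∀ ⦃w : W⦄, w ∈ a.dom → ∀ v ∈ a.val w, ∀ v', M.le v v' →
      ∃ w', M.le w w' ∧ v' ∈ a.val w')

/-- A model is coherent if all its intuitionistic neighbourhoods are coherent. -/
def INStruct.Coherent (M : INStruct W) : Prop := ∀ a ∈ M.N, M.CoherentNbhd a

/-- Semantic consequence over the class of coherent intuitionistic neighbourhood models. -/
def CohConseq (Γ : Set Formula) (φ : Formula) : Prop :=
  ∀ (W : Type) (M : INStruct W), M.IsModel → M.Coherent →
    ∀ w : W, (∀ ψ ∈ Γ, M.sat ψ w) → M.sat φ w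

/-- The relation R: w R v iff v ∈ a(w) for some neighbourhood a of w. -/
def INStruct.R (M : INStruct W) (w v : W) : Prop :=
  ∃ a ∈ M.N, w ∈ a.dom ∧ v ∈ a.val w

/-- R~-Cartesian: w ≤~ v R~ w implies w = v (with ~ the equivalence closures). -/
def INStruct.RCartesian (M : INStruct W) : Prop :=
  ∀ w v, Relation.EqvGen M.le w v → Relation.EqvGen M.R v w → w = v

/-- N-Cartesian: w R~ v and w, v ∈ dom(a) imply a(w) = a(v). -/
def INStruct.NCartesian (M : INStruct W) : Prop :=
  ∀ a ∈ M.N, ∀ w v, Relation.EqvGen M.R w v → w ∈ a.dom → v ∈ a.dom →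
    a.val w = a.val v

/-- Cartesian: both R~-Cartesian and N-Cartesian. -/
def INStruct.Cartesian (M : INStruct W) : Prop := M.RCartesian ∧ M.NCartesian

/-- Isomorphism of intuitionistic neighbourhood structures. -/
def Isomorphic (M : INStruct W) (M' : INStruct W') : Prop :=
  ∃ (α : W → W') (ν : Nbhd W → Nbhd W'),
    Function.Bijective α ∧ Set.BijOn ν M.N M'.N ∧
    (∀ w v, M.le w v ↔ M'.le (α w) (α v)) ∧
    (∀ a ∈ M.N, ∀ w, w ∈ a.dom ↔ α w ∈ (ν a).dom) ∧
    (∀ a ∈ M.N, ∀ u ∈ a.dom, ∀ w, w ∈ a.val u ↔ α w ∈ (ν a).val (α u)) ∧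
    (∀ i w, w ∈ M.V i ↔ α w ∈ M'.V i)

end IMPaper
namespace IMPaper

section Soundness

variable {W : Type}

lemma persist {M : INStruct W} (hM : M.IsModel) :
    ∀ (φ : Formula) {w v : W}, M.le w v → M.sat φ w → M.sat φ v := by
  have htrans : ∀ {a b c}, M.le a b → M.le b c → M.le a c :=
    fun h1 h2 => hM.1.trans _ _ _ h1 h2
  intro φ
  induction φ with
  | prop i => exact fun h hw => hM.2.2 i h hw
  | bot => exact fun _ hw => hw
  | and φ ψ ihφ ihψ => exact fun h hw => ⟨ihφ h hw.1, ihψ h hw.2⟩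
  | or φ ψ ihφ ihψ =>
      intro w v h hw
      rcases hw with h1 | h1
      · exact Or.inl (ihφ h h1)
      · exact Or.inr (ihψ h h1)
  | imp φ ψ ihφ ihψ => exact fun h hw u hu hφ => hw u (htrans h hu) hφ
  | box φ ih =>
      intro w v h hw
      obtain ⟨a, haN, hdom, hval⟩ := hw
      exact ⟨a, haN, hM.2.1 a haN h hdom,
        fun w' hw' u hu => hval w' (htrans h hw') u hu⟩
  | dia φ ih =>
      intro w v h hw w' hw' a haN hdom
      exact hw w' (htrans h hw') a haN hdom

/-- The model obtained by reinterpreting proposition letters via σ. -/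
def substModel (M : INStruct W) (σ : ℕ → Formula) : INStruct W :=
  ⟨M.le, M.N, fun i => {w | M.sat (σ i) w}⟩

lemma substModel_isModel {M : INStruct W} (hM : M.IsModel) (σ : ℕ → Formula) :
    (substModel M σ).IsModel :=
  ⟨hM.1, hM.2.1, fun i _ _ h hw => persist hM (σ i) h hw⟩

lemma substModel_sat {M : INStruct W} (σ : ℕ → Formula) :
    ∀ (φ : Formula) (w : W), (substModel M σ).sat φ w ↔ M.sat (φ.subst σ) w := by
  intro φ
  induction φ with
  | prop i => exact fun w => Iff.rfl
  | bot => exact fun w => Iff.rfl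
  | and φ ψ ihφ ihψ => intro w; simp [INStruct.sat, Formula.subst, ihφ, ihψ]
  | or φ ψ ihφ ihψ => intro w; simp [INStruct.sat, Formula.subst, ihφ, ihψ]
  | imp φ ψ ihφ ihψ =>
      intro w
      exact ⟨fun h v hv hφ => (ihψ v).mp (h v hv ((ihφ v).mpr hφ)),
        fun h v hv hφ => (ihψ v).mpr (h v hv ((ihφ v).mp hφ))⟩
  | box φ ih =>
      intro w
      exact ⟨fun ⟨a, haN, hdom, hval⟩ =>
          ⟨a, haN, hdom, fun w' hw' u hu => (ih u).mp (hval w' hw' u hu)⟩,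
        fun ⟨a, haN, hdom, hval⟩ =>
          ⟨a, haN, hdom, fun w' hw' u hu => (ih u).mpr (hval w' hw' u hu)⟩⟩
  | dia φ ih =>
      intro w
      constructor
      · intro h w' hw' a haN hdom
        obtain ⟨u, hu, hφ⟩ := h w' hw' a haN hdom
        exact ⟨u, hu, (ih u).mp hφ⟩
      · intro h w' hw' a haN hdom
        obtain ⟨u, hu, hφ⟩ := h w' hw' a haN hdom
        exact ⟨u, hu, (ih u).mpr hφ⟩

/-- Validity over all intuitionistic neighbourhood models. -/
def Valid (φ : Formula) : Prop :=
  ∀ (W : Type) (M : INStruct W), M.IsModel → ∀ w, M.sat φ w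

lemma valid_subst {ψ : Formula} (h : Valid ψ) (σ : ℕ → Formula) :
    Valid (ψ.subst σ) := by
  intro W M hM w
  exact (substModel_sat σ ψ w).mp (h W (substModel M σ) (substModel_isModel hM σ) w)

lemma valid_ipc : ∀ ψ ∈ IpcAx, Valid ψ := by
  intro ψ hψ W M hM w
  have hrefl : ∀ a, M.le a a := fun a => hM.1.refl a
  have htrans : ∀ {a b c}, M.le a b → M.le b c → M.le a c :=
    fun h1 h2 => hM.1.trans _ _ _ h1 h2
  simp only [IpcAx, Set.mem_insert_iff, Set.mem_singleton_iff] at hψ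
  rcases hψ with rfl | rfl | rfl | rfl | rfl | rfl | rfl | rfl | rfl
  · exact fun v _ h0 u hu _ => persist hM _ hu h0
  · intro v _ h012 u hu h01 t ht h0
    exact h012 t (htrans hu ht) h0 t (hrefl t) (h01 t ht h0)
  · exact fun v _ h => h.1
  · exact fun v _ h => h.2
  · exact fun v _ h0 u hu h1 => ⟨persist hM _ hu h0, h1⟩
  · exact fun v _ h0 => Or.inl h0
  · exact fun v _ h1 => Or.inr h1
  · intro v _ h02 u hu h12 t ht h01
    rcases h01 with h0 | h1
    · exact h02 t (htrans hu ht) h0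
    · exact h12 t ht h1
  · exact fun v _ h => h.elim

lemma valid_im : ∀ ψ ∈ IMAx, Valid ψ := by
  intro ψ hψ W M hM w
  have hrefl : ∀ a, M.le a a := fun a => hM.1.refl a
  have htrans : ∀ {a b c}, M.le a b → M.le b c → M.le a c :=
    fun h1 h2 => hM.1.trans _ _ _ h1 h2
  simp only [IMAx, Set.mem_insert_iff, Set.mem_singleton_iff] at hψ
  rcases hψ with rfl | rfl
  · -- (□p ∧ ◇¬p) → ⊥
    intro v _ hconj
    obtain ⟨⟨a, haN, hdom, hval⟩, hdia⟩ := hconj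
    obtain ⟨u, hu, hnp⟩ := hdia v (hrefl v) a haN hdom
    exact hnp u (hrefl u) (hval v (hrefl v) u hu)
  · -- (□⊤ → ◇p) → ◇p
    intro v _ himp w' hw' a haN hdom
    have hboxtop : M.sat (Formula.box Formula.top) w' :=
      ⟨a, haN, hdom, fun _ _ _ _ _ _ h => h⟩
    have hdia : M.sat (Formula.dia pp0) w' := himp w' hw' hboxtop
    exact hdia w' (hrefl w') a haN hdom

theorem ghc_sound {Γ : Set Formula} {φ : Formula} (h : GHC IMAx Γ φ) :
    INConseq Γ φ := by
  induction h with
  | el hmem => exact fun W M hM w hΓ => hΓ _ hmem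
  | ax hax =>
      intro W M hM w hΓ
      rcases hax with ⟨ψ, hψ, σ, rfl⟩ | ⟨ψ, hψ, σ, rfl⟩
      · exact valid_subst (valid_im ψ hψ) σ W M hM w
      · exact valid_subst (valid_ipc ψ hψ) σ W M hM w
  | mp h1 h2 ih1 ih2 =>
      intro W M hM w hΓ
      exact ih2 W M hM w hΓ w (hM.1.refl w) (ih1 W M hM w hΓ)
  | monBox h1 ih =>
      intro W M hM w _ v hv hbox
      obtain ⟨a, haN, hdom, hval⟩ := hbox
      refine ⟨a, haN, hdom, fun w' hw' u hu => ?_⟩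
      have himp := ih W M hM u (fun _ h => absurd h (Set.notMem_empty _))
      exact himp u (hM.1.refl u) (hval w' hw' u hu)
  | monDia h1 ih =>
      intro W M hM w _ v hv hdia w' hw' a haN hdom
      obtain ⟨u, hu, hφ⟩ := hdia w' hw' a haN hdom
      have himp := ih W M hM u (fun _ h => absurd h (Set.notMem_empty _))
      exact ⟨u, hu, himp u (hM.1.refl u) hφ⟩

end Soundness

/-- Soundness of IMCalc: if Γ ⊢_{IMCalc} φ then Γ ⊩^{inm} φ. -/
theorem imcalc_sound (Γ : Set Formula) (φ : Formula) (h : IMC Γ φ) :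
    INConseq Γ φ :=
  ghc_sound h

end IMPaper
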